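/- For two quantum channels with Choi matrices Φ_μ, Ψ_μ, the conditional CB semidistance D_cb^ρ(Φ,Ψ) = Tr|(ρ̃^{1/2} ⊗ I)(Φ_μ - Ψ_μ)(ρ̃^{1/2} ⊗ I)| and the conditional Hellinger distance d_c^ρ with (d_c^ρ)²/2 = 1 - Tr|Φ_μ^{1/2}(ρ̃ ⊗ I)Ψ_μ^{1/2}| satisfy the equivalence inequalities (d_c^ρ)² ≤ D_cb^ρ ≤ 2 d_c^ρ for every density matrix ρ. -/

import Mathlib

open Matrix Kronecker
open scoped ComplexOrder

open scoped Classical in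
/-- Positive semidefinite square root (zero if the matrix is not PSD). -/
noncomputable def psqrt {n : Type*} [Fintype n] [DecidableEq n] (A : Matrix n n ℂ) : Matrix n n ℂ :=
  if h : A.PosSemidef then (h.1.eigenvectorUnitary : Matrix n n ℂ) *
    diagonal ((↑) ∘ Real.sqrt ∘ h.1.eigenvalues) * (star h.1.eigenvectorUnitary : Matrix n n ℂ) else 0

/-- Matrix absolute value `|A| = √(Aᴴ A)`. -/
noncomputable def matAbs {n : Type*} [Fintype n] [DecidableEq n] (A : Matrix n n ℂ) : Matrix n n ℂ :=
  psqrt (Aᴴ * A)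

/-!
With `S = √ρᵀ ⊗ 1`, the matrices `σ = S Φμ S` and `τ = S Ψμ S` are density matrices and the
CB-semidistance is `‖σ - τ‖₁`. Writing `X = √Φμ S`, `Z = √Ψμ S`, the Hellinger term involves
`‖X Zᴴ‖₁`, and `‖X Zᴴ‖₁ = ‖|X| |Z|‖₁ = ‖√σ √τ‖₁ = F(σ, τ)` because the trace norm only depends on
`Aᴴ A` and is invariant under `A ↦ Aᴴ`. So the claim is the Fuchs–van de Graaf inequality for the
states `σ`, `τ`.

Lower bound: testing `σ - τ = (√σ - √τ) √σ + √τ (√σ - √τ)` against the sign of `√σ - √τ` gives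
the Powers–Størmer inequality `tr (√σ - √τ)² ≤ ‖σ - τ‖₁`, and `tr (√σ - √τ)² = 2 - 2 Re tr (√σ √τ)`
with `Re tr (√σ √τ) ≤ F`.

Upper bound: with `E` the projection onto the positive part of `σ - τ`, `p = tr (E σ)` and
`q = tr (E τ)`, one has `‖σ - τ‖₁ = 2 (p - q)`; writing `F = tr (Wᴴ √σ (E + (1 - E)) √τ)` with a
polar decomposition `√σ √τ = W |√σ √τ|`, Cauchy–Schwarz gives `F ≤ √(p q) + √((1 - p) (1 - q))`,
whence `(p - q)² ≤ 1 - F² ≤ 2 (1 - F)`.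
-/

lemma sub_sq_le_two_mul_one_sub {p q f : ℝ} (hp0 : 0 ≤ p) (hp1 : p ≤ 1) (hq0 : 0 ≤ q) (hq1 : q ≤ 1)
    (hf0 : 0 ≤ f) (hf : f ≤ √p * √q + √(1 - p) * √(1 - q)) : (p - q) ^ 2 ≤ 2 * (1 - f) := by
  have ha := Real.sq_sqrt hp0
  have hb := Real.sq_sqrt hq0
  have hc := Real.sq_sqrt (sub_nonneg.mpr hp1)
  have hd := Real.sq_sqrt (sub_nonneg.mpr hq1)
  set a := √p
  set b := √q
  set c := √(1 - p)
  set d := √(1 - q)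
  -- given `a² + c² = b² + d² = 1`, `1 - (ab + cd)² - (a² - b²)² = (ac - bd)²`
  have hbhat : (p - q) ^ 2 + (a * b + c * d) ^ 2 ≤ 1 := by
    rw [← ha, ← hb]
    nlinarith [sq_nonneg (a * c - b * d)]
  have hf2 : f ^ 2 ≤ (a * b + c * d) ^ 2 := pow_le_pow_left₀ hf0 hf 2
  nlinarith [sq_nonneg (1 - f)]

open scoped MatrixOrder

namespace Matrix

variable {k : Type*} [Fintype k]

lemma re_trace_mono {A B : Matrix k k ℂ} (h : A ≤ B) : A.trace.re ≤ B.trace.re := by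
  have := (Matrix.le_iff.mp h).trace_nonneg
  rw [trace_sub] at this
  simpa using (Complex.le_def.mp this).1

variable [DecidableEq k]

lemma psqrt_eq_cfcSqrt {A : Matrix k k ℂ} (hA : A.PosSemidef) : psqrt A = CFC.sqrt A := by
  rw [CFC.sqrt_eq_real_sqrt A hA.nonneg, cfcₙ_eq_cfc, hA.1.cfc_eq, IsHermitian.cfc,
    Unitary.conjStarAlgAut_apply, psqrt, dif_pos hA]
  rfl

lemma matAbs_eq_cfcAbs (A : Matrix k k ℂ) : matAbs A = CFC.abs A :=
  psqrt_eq_cfcSqrt (posSemidef_conjTranspose_mul_self A)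

lemma conjTranspose_cfcSqrt (A : Matrix k k ℂ) : (CFC.sqrt A)ᴴ = CFC.sqrt A :=
  (CFC.sqrt_nonneg A).isSelfAdjoint

lemma conjTranspose_cfcAbs (A : Matrix k k ℂ) : (CFC.abs A)ᴴ = CFC.abs A :=
  (CFC.abs_nonneg A).isSelfAdjoint

lemma continuousOn_spectrum (f : ℝ → ℝ) (A : Matrix k k ℂ) : ContinuousOn f (spectrum ℝ A) :=
  (spectrum ℝ A).toFinite.continuousOn f

lemma cfc_mul_cfc (f g : ℝ → ℝ) (A : Matrix k k ℂ) :
    cfc f A * cfc g A = cfc (fun x => f x * g x) A :=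
  (cfc_mul f g A (continuousOn_spectrum f A) (continuousOn_spectrum g A)).symm

lemma cfc_mul_self_eq (f : ℝ → ℝ) {A : Matrix k k ℂ} (hA : IsSelfAdjoint A) :
    cfc f A * A = cfc (fun x => f x * x) A := by
  nth_rewrite 2 [← cfc_id' ℝ A]
  exact cfc_mul_cfc _ _ _

lemma self_mul_cfc_eq (f : ℝ → ℝ) {A : Matrix k k ℂ} (hA : IsSelfAdjoint A) :
    A * cfc f A = cfc (fun x => x * f x) A := by
  nth_rewrite 1 [← cfc_id' ℝ A]
  exact cfc_mul_cfc _ _ _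

lemma re_trace_mul_nonneg {A B : Matrix k k ℂ} (hA : 0 ≤ A) (hB : 0 ≤ B) :
    0 ≤ (A * B).trace.re := by
  rw [← CFC.sqrt_mul_sqrt_self A hA, mul_assoc, trace_mul_comm]
  have := star_left_conjugate_nonneg hB (CFC.sqrt A)
  rw [star_eq_conjTranspose, conjTranspose_cfcSqrt] at this
  simpa using (Complex.le_def.mp (nonneg_iff_posSemidef.mp this).trace_nonneg).1

lemma mul_eq_self_of_isStarProjection {M E : Matrix k k ℂ} (hE : IsStarProjection E)
    (h : E * (Mᴴ * M) = Mᴴ * M) : M * E = M := by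
  have hEH : Eᴴ = E := hE.isSelfAdjoint
  have h' : Mᴴ * M * E = Mᴴ * M := by
    simpa only [conjTranspose_mul, conjTranspose_conjTranspose, hEH] using congrArg conjTranspose h
  rw [← sub_eq_zero, ← conjTranspose_mul_self_eq_zero]
  calc (M * E - M)ᴴ * (M * E - M)
      = E * (Mᴴ * M) * E - E * (Mᴴ * M) - Mᴴ * M * E + Mᴴ * M := by
        rw [conjTranspose_sub, conjTranspose_mul, hEH]; noncomm_ring
    _ = 0 := by rw [h, h']; abel

lemma exists_eq_mul_cfcAbs (M : Matrix k k ℂ) :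
    ∃ W : Matrix k k ℂ, M = W * CFC.abs M ∧ Wᴴ * W * CFC.abs M = CFC.abs M ∧
      Wᴴ * W ≤ 1 ∧ W * Wᴴ ≤ 1 := by
  set R := CFC.abs M
  have hR : IsSelfAdjoint R := (CFC.abs_nonneg M).isSelfAdjoint
  have hRR : R * R = Mᴴ * M := CFC.abs_mul_abs M
  -- since `0⁻¹ = 0`, `J` inverts `R` on its range and `E = R J` projects onto that range
  set J := cfc (·⁻¹ : ℝ → ℝ) R
  set E := cfc (fun x : ℝ => x * x⁻¹) R
  have hJ : Jᴴ = J := IsSelfAdjoint.cfc.star_eq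
  have hE : IsStarProjection E := by
    refine ⟨?_, IsSelfAdjoint.cfc⟩
    rw [IsIdempotentElem, cfc_mul_cfc]
    exact cfc_congr fun x _ => by by_cases hx : x = 0 <;> simp [hx]
  have hRJ : R * J = E := self_mul_cfc_eq _ hR
  have hJR : J * R = E := (cfc_mul_self_eq _ hR).trans (cfc_congr fun x _ => mul_comm _ _)
  have hER : E * R = R :=
    ((cfc_mul_self_eq _ hR).trans (cfc_congr fun x _ => mul_inv_mul_cancel x)).trans (cfc_id' ℝ R)
  have hJE : J * E = J := by
    rw [cfc_mul_cfc]
    exact cfc_congr fun x _ => by by_cases hx : x = 0 <;> simp [hx]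
  have hME : M * E = M := mul_eq_self_of_isStarProjection hE (by rw [← hRR, ← mul_assoc, hER])
  have hWW : (M * J)ᴴ * (M * J) = E := by
    rw [conjTranspose_mul, hJ, show J * Mᴴ * (M * J) = J * (Mᴴ * M) * J by noncomm_ring, ← hRR,
      show J * (R * R) * J = J * R * (R * J) by noncomm_ring, hJR, hRJ, hE.isIdempotentElem.eq]
  have hWW' : IsStarProjection ((M * J) * (M * J)ᴴ) := by
    refine ⟨?_, IsSelfAdjoint.mul_star_self (M * J)⟩
    rw [IsIdempotentElem, show M * J * (M * J)ᴴ * (M * J * (M * J)ᴴ) =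
      M * J * ((M * J)ᴴ * (M * J)) * (M * J)ᴴ by noncomm_ring, hWW, mul_assoc M J E, hJE]
  refine ⟨M * J, ?_, ?_, ?_, hWW'.le_one⟩
  · rw [mul_assoc, hJR, hME]
  · rw [hWW, hER]
  · exact hWW ▸ hE.le_one

lemma exists_isStarProjection_cfcAbs_eq {A : Matrix k k ℂ} (hA : IsSelfAdjoint A) :
    ∃ P : Matrix k k ℂ, IsStarProjection P ∧ Commute P A ∧ CFC.abs A = (2 * P - 1) * A := by
  set f : ℝ → ℝ := fun x => if 0 < x then 1 else 0
  have hP : IsStarProjection (cfc f A) := by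
    refine ⟨?_, IsSelfAdjoint.cfc⟩
    rw [IsIdempotentElem, cfc_mul_cfc]
    exact cfc_congr fun x _ => by by_cases hx : 0 < x <;> simp [f, hx]
  have hPA : cfc f A * A = cfc (fun x => f x * x) A := cfc_mul_self_eq f hA
  refine ⟨cfc f A, hP, ?_, ?_⟩
  · rw [Commute, SemiconjBy, hPA, self_mul_cfc_eq f hA]
    exact cfc_congr fun x _ => mul_comm _ _
  · rw [sub_mul, mul_assoc, hPA, one_mul, two_mul, ← cfc_add (hf := continuousOn_spectrum _ A)
      (hg := continuousOn_spectrum _ A)]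
    nth_rewrite 3 [← cfc_id' ℝ A]
    rw [← cfc_sub (hf := continuousOn_spectrum _ A) (hg := continuousOn_spectrum _ A),
      CFC.abs_eq_cfc_norm A]
    refine cfc_congr fun x _ => ?_
    by_cases hx : 0 < x
    · simp [f, hx, abs_of_pos hx]
    · simp [f, hx, abs_of_nonpos (not_lt.mp hx)]

noncomputable def traceNorm (A : Matrix k k ℂ) : ℝ := (CFC.abs A).trace.re

noncomputable def fidelity (σ τ : Matrix k k ℂ) : ℝ := traceNorm (CFC.sqrt σ * CFC.sqrt τ)

lemma traceNorm_nonneg (A : Matrix k k ℂ) : 0 ≤ traceNorm A :=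
  (Complex.le_def.mp (nonneg_iff_posSemidef.mp (CFC.abs_nonneg A)).trace_nonneg).1

lemma fidelity_nonneg (σ τ : Matrix k k ℂ) : 0 ≤ fidelity σ τ :=
  traceNorm_nonneg _

lemma re_trace_matAbs (A : Matrix k k ℂ) : (matAbs A).trace.re = traceNorm A := by
  rw [matAbs_eq_cfcAbs, traceNorm]

lemma re_trace_mul_le_re_trace {P C : Matrix k k ℂ} (hP : 0 ≤ P) (hC : Cᴴ * C ≤ 1) :
    (P * C).trace.re ≤ P.trace.re := by
  -- `2 - C - Cᴴ = (1 - C)ᴴ (1 - C) + (1 - Cᴴ C) ≥ 0`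
  have hsum : 0 ≤ (1 - C)ᴴ * (1 - C) + (1 - Cᴴ * C) :=
    add_nonneg (posSemidef_conjTranspose_mul_self _).nonneg (sub_nonneg.mpr hC)
  have hexp : P * ((1 - C)ᴴ * (1 - C) + (1 - Cᴴ * C)) = P + P - P * C - P * Cᴴ := by
    simp only [conjTranspose_sub, conjTranspose_one]; noncomm_ring
  have hPH : Pᴴ = P := hP.isSelfAdjoint
  have hstar : (P * Cᴴ).trace = star (P * C).trace := by
    rw [← trace_conjTranspose, conjTranspose_mul, hPH, trace_mul_comm]
  have h := re_trace_mul_nonneg hP hsum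
  rw [hexp, trace_sub, trace_sub, trace_add, hstar] at h
  simp only [Complex.sub_re, Complex.add_re, Complex.star_def, Complex.conj_re] at h
  linarith

lemma re_trace_mul_le_traceNorm (M : Matrix k k ℂ) {C : Matrix k k ℂ} (hC : Cᴴ * C ≤ 1) :
    (M * C).trace.re ≤ traceNorm M := by
  obtain ⟨W, hM, -, hW, -⟩ := exists_eq_mul_cfcAbs M
  have hCW : (C * W)ᴴ * (C * W) ≤ 1 := calc
    (C * W)ᴴ * (C * W) = star W * (Cᴴ * C) * W := by
      rw [conjTranspose_mul, star_eq_conjTranspose]; noncomm_ring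
    _ ≤ star W * 1 * W := star_left_conjugate_le_conjugate hC W
    _ ≤ 1 := by rwa [mul_one, star_eq_conjTranspose]
  conv_lhs => rw [hM, mul_assoc, trace_mul_comm, mul_assoc]
  exact re_trace_mul_le_re_trace (CFC.abs_nonneg M) hCW

lemma re_trace_le_traceNorm (M : Matrix k k ℂ) : M.trace.re ≤ traceNorm M := by
  simpa using re_trace_mul_le_traceNorm M (C := 1) (by simp)

lemma traceNorm_eq_of_conjTranspose_mul_self_eq {A B : Matrix k k ℂ} (h : Aᴴ * A = Bᴴ * B) :
    traceNorm A = traceNorm B := by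
  simp only [traceNorm, CFC.abs, star_eq_conjTranspose, h]

lemma traceNorm_conjTranspose (B : Matrix k k ℂ) : traceNorm Bᴴ = traceNorm B := by
  obtain ⟨W, hB, hWR, -, -⟩ := exists_eq_mul_cfcAbs B
  set R := CFC.abs B
  have hRH : Rᴴ = R := conjTranspose_cfcAbs B
  have habs : CFC.abs Bᴴ = W * R * Wᴴ := by
    refine CFC.sqrt_unique ?_ ?_
    · calc W * R * Wᴴ * (W * R * Wᴴ) = W * R * (Wᴴ * W * R) * Wᴴ := by noncomm_ring
        _ = star Bᴴ * Bᴴ := by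
          rw [hWR, star_eq_conjTranspose, conjTranspose_conjTranspose, hB, conjTranspose_mul, hRH]
          noncomm_ring
    · simpa [star_eq_conjTranspose] using star_right_conjugate_nonneg (CFC.abs_nonneg B) W
  rw [traceNorm, traceNorm, habs, trace_mul_cycle, hWR]

lemma traceNorm_mul_conjTranspose (X Z : Matrix k k ℂ) :
    traceNorm (X * Zᴴ) = traceNorm (CFC.abs X * CFC.abs Z) := by
  have hX := conjTranspose_cfcAbs X
  have hZ := conjTranspose_cfcAbs Z
  have hXX : Xᴴ * X = CFC.abs X * CFC.abs X := (CFC.abs_mul_abs X).symm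
  have hZZ : Zᴴ * Z = CFC.abs Z * CFC.abs Z := (CFC.abs_mul_abs Z).symm
  calc traceNorm (X * Zᴴ) = traceNorm (Z * CFC.abs X)ᴴ := by
        refine traceNorm_eq_of_conjTranspose_mul_self_eq ?_
        simp only [conjTranspose_mul, conjTranspose_conjTranspose, hX]
        rw [show Z * Xᴴ * (X * Zᴴ) = Z * (Xᴴ * X) * Zᴴ by noncomm_ring, hXX]
        noncomm_ring
    _ = traceNorm (CFC.abs Z * CFC.abs X) := by
        rw [traceNorm_conjTranspose]
        refine traceNorm_eq_of_conjTranspose_mul_self_eq ?_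
        simp only [conjTranspose_mul, hX, hZ]
        rw [show CFC.abs X * Zᴴ * (Z * CFC.abs X) = CFC.abs X * (Zᴴ * Z) * CFC.abs X by
          noncomm_ring, hZZ]
        noncomm_ring
    _ = traceNorm (CFC.abs X * CFC.abs Z) := by
        rw [← traceNorm_conjTranspose, conjTranspose_mul, hX, hZ]

lemma fidelity_conjTranspose_mul_mul {A B : Matrix k k ℂ} (hA : 0 ≤ A) (hB : 0 ≤ B)
    (S : Matrix k k ℂ) :
    fidelity (Sᴴ * A * S) (Sᴴ * B * S) = traceNorm (CFC.sqrt A * (S * Sᴴ) * CFC.sqrt B) := by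
  have habs {C : Matrix k k ℂ} (hC : 0 ≤ C) : CFC.abs (CFC.sqrt C * S) = CFC.sqrt (Sᴴ * C * S) := by
    rw [CFC.abs, star_eq_conjTranspose, conjTranspose_mul, conjTranspose_cfcSqrt,
      show Sᴴ * CFC.sqrt C * (CFC.sqrt C * S) = Sᴴ * (CFC.sqrt C * CFC.sqrt C) * S by noncomm_ring,
      CFC.sqrt_mul_sqrt_self C]
  rw [fidelity, ← habs hA, ← habs hB, ← traceNorm_mul_conjTranspose, conjTranspose_mul,
    conjTranspose_cfcSqrt]
  congr 1
  noncomm_ring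

/-- The Powers–Størmer inequality. -/
lemma re_trace_sub_mul_sub_le_traceNorm {A B : Matrix k k ℂ} (hA : 0 ≤ A) (hB : 0 ≤ B) :
    ((A - B) * (A - B)).trace.re ≤ traceNorm (A * A - B * B) := by
  set X := A - B
  have hX : IsSelfAdjoint X := hA.isSelfAdjoint.sub hB.isSelfAdjoint
  obtain ⟨P, hP, hPX, habs⟩ := exists_isStarProjection_cfcAbs_eq hX
  set S := 2 * P - 1
  have hSX : S * X = CFC.abs X := habs.symm
  have hXS : X * S = CFC.abs X :=
    hSX ▸ (((Commute.ofNat_left 2 X).mul_left hPX).sub_left (Commute.one_left X)).symm.eq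
  have hSS : Sᴴ * S ≤ 1 := by
    have hPH : Pᴴ = P := hP.isSelfAdjoint
    have hPP : P * P = P := hP.isIdempotentElem
    rw [conjTranspose_sub, conjTranspose_mul, hPH, conjTranspose_one,
      show (2 : Matrix k k ℂ)ᴴ = 2 by simp]
    rw [show (P * 2 - 1) * (2 * P - 1) = 4 * (P * P) - 4 * P + 1 by noncomm_ring, hPP]
    simp
  have hsplit : ((A * A - B * B) * S).trace =
      (A * (CFC.abs X - X)).trace + (B * (CFC.abs X + X)).trace + (X * X).trace := by
    rw [show A * A - B * B = X * A + B * X by simp only [X]; noncomm_ring, add_mul, mul_assoc B,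
      trace_add, trace_mul_cycle, hSX, hXS, trace_mul_comm _ A]
    simp only [X, mul_sub, mul_add, sub_mul, trace_sub, trace_add]
    ring
  have hsub := re_trace_mul_nonneg hA
    (CFC.abs_sub_self X ▸ smul_nonneg zero_le_two (CFC.negPart_nonneg X))
  have hadd := re_trace_mul_nonneg hB
    (CFC.abs_add_self X ▸ smul_nonneg zero_le_two (CFC.posPart_nonneg X))
  have := re_trace_mul_le_traceNorm (A * A - B * B) hSS
  rw [hsplit] at this
  simp only [Complex.add_re] at this
  linarith

theorem two_mul_one_sub_fidelity_le_traceNorm_sub {σ τ : Matrix k k ℂ} (hσ : 0 ≤ σ) (hτ : 0 ≤ τ)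
    (hσ1 : σ.trace = 1) (hτ1 : τ.trace = 1) : 2 * (1 - fidelity σ τ) ≤ traceNorm (σ - τ) := by
  set P := CFC.sqrt σ
  set Q := CFC.sqrt τ
  have hPP : P * P = σ := CFC.sqrt_mul_sqrt_self σ
  have hQQ : Q * Q = τ := CFC.sqrt_mul_sqrt_self τ
  have hsq : ((P - Q) * (P - Q)).trace.re = 2 - 2 * (P * Q).trace.re := by
    rw [show (P - Q) * (P - Q) = P * P + Q * Q - P * Q - Q * P by noncomm_ring, trace_sub,
      trace_sub, trace_add, hPP, hQQ, hσ1, hτ1, trace_mul_comm Q P]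
    simp only [Complex.sub_re, Complex.add_re, Complex.one_re]
    ring
  have hPS := re_trace_sub_mul_sub_le_traceNorm (CFC.sqrt_nonneg σ) (CFC.sqrt_nonneg τ)
  rw [hPP, hQQ, hsq] at hPS
  linarith [re_trace_le_traceNorm (P * Q), show traceNorm (P * Q) = fidelity σ τ from rfl]

lemma norm_trace_conjTranspose_mul_le (A B : Matrix k k ℂ) :
    ‖(Aᴴ * B).trace‖ ≤ √(Aᴴ * A).trace.re * √(Bᴴ * B).trace.re := by
  -- the Frobenius inner product `⟪A, B⟫ = tr (Aᴴ B)`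
  let := toMatrixSeminormedAddCommGroup (1 : Matrix k k ℂ) PosSemidef.one
  let := toMatrixInnerProductSpace (1 : Matrix k k ℂ) PosSemidef.one
  have hnorm (C : Matrix k k ℂ) : ‖C‖ = √(Cᴴ * C).trace.re := by
    rw [norm_eq_sqrt_re_inner (𝕜 := ℂ)]
    change √(RCLike.re (C * 1 * Cᴴ).trace) = _
    rw [mul_one, trace_mul_comm]
    rfl
  have hinner : inner ℂ A B = (Aᴴ * B).trace := by
    change (B * 1 * Aᴴ).trace = _
    rw [mul_one, trace_mul_comm]
  rw [← hinner, ← hnorm, ← hnorm]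
  exact norm_inner_le_norm A B

lemma norm_trace_mul_mul_le {W P Q E : Matrix k k ℂ} (hW : W * Wᴴ ≤ 1) (hP : IsSelfAdjoint P)
    (hQ : IsSelfAdjoint Q) (hE : IsStarProjection E) :
    ‖(Wᴴ * P * E * Q).trace‖ ≤ √(E * (P * P)).trace.re * √(E * (Q * Q)).trace.re := by
  have hPH : Pᴴ = P := hP
  have hQH : Qᴴ = Q := hQ
  have hEH : Eᴴ = E := hE.isSelfAdjoint
  have hEE : E * E = E := hE.isIdempotentElem
  have hsplit : Wᴴ * P * E * Q = (E * P * W)ᴴ * (E * Q) := by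
    rw [conjTranspose_mul, conjTranspose_mul, hPH, hEH,
      show Wᴴ * (P * E) * (E * Q) = Wᴴ * P * (E * E) * Q by noncomm_ring, hEE]
  have hleft : ((E * P * W)ᴴ * (E * P * W)).trace.re ≤ (E * (P * P)).trace.re := by
    have hconj := star_right_conjugate_le_conjugate hW (E * P)
    rw [star_eq_conjTranspose, conjTranspose_mul, hPH, hEH, mul_one] at hconj
    calc ((E * P * W)ᴴ * (E * P * W)).trace.re = (E * P * (W * Wᴴ) * (P * E)).trace.re := by
          rw [trace_mul_comm, conjTranspose_mul, conjTranspose_mul, hPH, hEH]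
          congr 2
          noncomm_ring
      _ ≤ (E * P * (P * E)).trace.re := re_trace_mono hconj
      _ = (E * (P * P)).trace.re := by
          rw [show E * P * (P * E) = E * (P * P) * E by noncomm_ring, trace_mul_comm, ← mul_assoc,
            hEE]
  have hright : ((E * Q)ᴴ * (E * Q)).trace = (E * (Q * Q)).trace := by
    rw [conjTranspose_mul, hQH, hEH, show Q * E * (E * Q) = Q * (E * E) * Q by noncomm_ring, hEE,
      trace_mul_cycle, trace_mul_comm]
  rw [hsplit, ← hright]
  exact (norm_trace_conjTranspose_mul_le _ _).trans
    (mul_le_mul_of_nonneg_right (Real.sqrt_le_sqrt hleft) (Real.sqrt_nonneg _))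

lemma fidelity_le_of_isStarProjection {σ τ E : Matrix k k ℂ} (hσ : 0 ≤ σ) (hτ : 0 ≤ τ)
    (hE : IsStarProjection E) :
    fidelity σ τ ≤ √(E * σ).trace.re * √(E * τ).trace.re +
      √((1 - E) * σ).trace.re * √((1 - E) * τ).trace.re := by
  set P := CFC.sqrt σ
  set Q := CFC.sqrt τ
  have hP : IsSelfAdjoint P := (CFC.sqrt_nonneg σ).isSelfAdjoint
  have hQ : IsSelfAdjoint Q := (CFC.sqrt_nonneg τ).isSelfAdjoint
  obtain ⟨W, hM, hWR, -, hW⟩ := exists_eq_mul_cfcAbs (P * Q)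
  have hsplit : fidelity σ τ = (Wᴴ * P * E * Q).trace.re + (Wᴴ * P * (1 - E) * Q).trace.re := by
    rw [fidelity, traceNorm, ← hWR, mul_assoc, ← hM,
      show Wᴴ * (P * Q) = Wᴴ * P * E * Q + Wᴴ * P * (1 - E) * Q by noncomm_ring, trace_add,
      Complex.add_re]
  have hPP : P * P = σ := CFC.sqrt_mul_sqrt_self σ
  have hQQ : Q * Q = τ := CFC.sqrt_mul_sqrt_self τ
  rw [hsplit, ← hPP, ← hQQ]
  exact add_le_add ((Complex.re_le_norm _).trans (norm_trace_mul_mul_le hW hP hQ hE))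
    ((Complex.re_le_norm _).trans (norm_trace_mul_mul_le hW hP hQ hE.one_sub))

theorem traceNorm_sub_le_two_mul_sqrt_fidelity {σ τ : Matrix k k ℂ} (hσ : 0 ≤ σ) (hτ : 0 ≤ τ)
    (hσ1 : σ.trace = 1) (hτ1 : τ.trace = 1) :
    traceNorm (σ - τ) ≤ 2 * √(2 * (1 - fidelity σ τ)) := by
  obtain ⟨E, hE, -, habs⟩ :=
    exists_isStarProjection_cfcAbs_eq (hσ.isSelfAdjoint.sub hτ.isSelfAdjoint)
  set p := (E * σ).trace.re
  set q := (E * τ).trace.re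
  have hD : traceNorm (σ - τ) = 2 * (p - q) := by
    rw [traceNorm, habs, show (2 * E - 1) * (σ - τ) = E * σ + E * σ - E * τ - E * τ - σ + τ by
      noncomm_ring]
    simp only [trace_add, trace_sub, hσ1, hτ1, Complex.add_re, Complex.sub_re, p, q]
    ring
  have hp : ((1 - E) * σ).trace.re = 1 - p := by simp [sub_mul, trace_sub, hσ1, p]
  have hq : ((1 - E) * τ).trace.re = 1 - q := by simp [sub_mul, trace_sub, hτ1, q]
  have hF := fidelity_le_of_isStarProjection hσ hτ hE
  rw [hp, hq] at hF
  have hp0 := re_trace_mul_nonneg hE.nonneg hσ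
  have hq0 := re_trace_mul_nonneg hE.nonneg hτ
  have hp1 := re_trace_mul_nonneg hE.one_sub_nonneg hσ
  have hq1 := re_trace_mul_nonneg hE.one_sub_nonneg hτ
  rw [hp] at hp1
  rw [hq] at hq1
  have := Real.abs_le_sqrt (sub_sq_le_two_mul_one_sub hp0 (by linarith) hq0 (by linarith)
    (fidelity_nonneg σ τ) hF)
  rw [hD]
  linarith [le_abs_self (p - q)]

end Matrix

theorem fuchs_van_de_graaf_channels {m n : Type*} [Fintype m] [DecidableEq m]
    [Fintype n] [DecidableEq n]
    (Φμ Ψμ : Matrix (n × m) (n × m) ℂ) (hΦ : Φμ.PosSemidef) (hΨ : Ψμ.PosSemidef)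
    (hΦ1 : ∀ ρ : Matrix n n ℂ, ρ.PosSemidef → ρ.trace = 1 →
      ((psqrt ρᵀ ⊗ₖ (1 : Matrix m m ℂ)) * Φμ * (psqrt ρᵀ ⊗ₖ (1 : Matrix m m ℂ))).trace = 1)
    (hΨ1 : ∀ ρ : Matrix n n ℂ, ρ.PosSemidef → ρ.trace = 1 →
      ((psqrt ρᵀ ⊗ₖ (1 : Matrix m m ℂ)) * Ψμ * (psqrt ρᵀ ⊗ₖ (1 : Matrix m m ℂ))).trace = 1) :
    ∀ ρ : Matrix n n ℂ, ρ.PosSemidef → ρ.trace = 1 →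
      2 * (1 - ((matAbs (psqrt Φμ * (ρᵀ ⊗ₖ (1 : Matrix m m ℂ)) * psqrt Ψμ)).trace).re) ≤
        ((matAbs ((psqrt ρᵀ ⊗ₖ (1 : Matrix m m ℂ)) * (Φμ - Ψμ) *
          (psqrt ρᵀ ⊗ₖ (1 : Matrix m m ℂ)))).trace).re ∧
      ((matAbs ((psqrt ρᵀ ⊗ₖ (1 : Matrix m m ℂ)) * (Φμ - Ψμ) *
          (psqrt ρᵀ ⊗ₖ (1 : Matrix m m ℂ)))).trace).re ≤
        2 * Real.sqrt (2 * (1 - ((matAbs (psqrt Φμ * (ρᵀ ⊗ₖ (1 : Matrix m m ℂ)) *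
          psqrt Ψμ)).trace).re)) := by
  intro ρ hρ hρ1
  have hσ1 := hΦ1 ρ hρ hρ1
  have hτ1 := hΨ1 ρ hρ hρ1
  simp only [psqrt_eq_cfcSqrt hρ.transpose, psqrt_eq_cfcSqrt hΦ, psqrt_eq_cfcSqrt hΨ,
    re_trace_matAbs] at hσ1 hτ1 ⊢
  set S := CFC.sqrt ρᵀ ⊗ₖ (1 : Matrix m m ℂ)
  have hS : Sᴴ = S := by rw [conjTranspose_kronecker, conjTranspose_one, conjTranspose_cfcSqrt]
  have hSS : ρᵀ ⊗ₖ (1 : Matrix m m ℂ) = S * Sᴴ := by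
    rw [hS, ← mul_kronecker_mul, CFC.sqrt_mul_sqrt_self ρᵀ hρ.transpose.nonneg, one_mul]
  have hσ : 0 ≤ S * Φμ * S := by simpa [hS] using (hΦ.conjTranspose_mul_mul_same S).nonneg
  have hτ : 0 ≤ S * Ψμ * S := by simpa [hS] using (hΨ.conjTranspose_mul_mul_same S).nonneg
  rw [hSS, ← fidelity_conjTranspose_mul_mul hΦ.nonneg hΨ.nonneg, hS,
    show S * (Φμ - Ψμ) * S = S * Φμ * S - S * Ψμ * S by noncomm_ring]
  exact ⟨two_mul_one_sub_fidelity_le_traceNorm_sub hσ hτ hσ1 hτ1,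
    traceNorm_sub_le_two_mul_sqrt_fidelity hσ hτ hσ1 hτ1⟩
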